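/- Let F = F(N,D) be a connected generalized Sierpiński carpet. Suppose there exists m ≥ 1 and a partition D^m = I ∪ J with I ∩ J = ∅ such that (⋃_{𝐢∈I} φ_𝐢(F)) ∩ (⋃_{𝐢∈J} φ_𝐢(F)) is a singleton {x}. Then F is fragile, i.e., there is a partition D = D₁ ∪ D₂, D₁ ∩ D₂ = ∅, with (⋃_{i∈D₁} φ_i(F)) ∩ (⋃_{i∈D₂} φ_i(F)) a singleton. -/

import Mathlib

open Set Topology

noncomputable def phi (N : ℕ) (i : ℕ × ℕ) (p : ℝ × ℝ) : ℝ × ℝ :=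
  ((p.1 + (i.1 : ℝ)) / (N : ℝ), (p.2 + (i.2 : ℝ)) / (N : ℝ))

noncomputable def phiW (N : ℕ) (l : List (ℕ × ℕ)) : ℝ × ℝ → ℝ × ℝ :=
  l.foldr (fun i g => phi N i ∘ g) id

def Words (D : Finset (ℕ × ℕ)) (k : ℕ) : Set (List (ℕ × ℕ)) :=
  {l | l.length = k ∧ ∀ a ∈ l, a ∈ D}

def GoodDigits (N : ℕ) (D : Finset (ℕ × ℕ)) : Prop :=
  2 ≤ N ∧ (∀ i ∈ D, i.1 < N ∧ i.2 < N) ∧ 1 < D.card ∧ D.card < N ^ 2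

def IsAttractor (N : ℕ) (D : Finset (ℕ × ℕ)) (F : Set (ℝ × ℝ)) : Prop :=
  F.Nonempty ∧ IsCompact F ∧ F = ⋃ i ∈ D, phi N i '' F

def OmegaW (N : ℕ) (D : Finset (ℕ × ℕ)) (F : Set (ℝ × ℝ)) (x : ℝ × ℝ) (k : ℕ) :
    Set (List (ℕ × ℕ)) :=
  {l | l ∈ Words D k ∧ x ∈ phiW N l '' F}

def Ek (N : ℕ) (D : Finset (ℕ × ℕ)) (F : Set (ℝ × ℝ)) (x : ℝ × ℝ) (k : ℕ) :
    Set (ℝ × ℝ) :=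
  ⋃ l ∈ Words D k \ OmegaW N D F x k, phiW N l '' F

def IsRep (N : ℕ) (D : Finset (ℕ × ℕ)) (F : Set (ℝ × ℝ)) (x : ℝ × ℝ)
    (ii : ℕ → ℕ × ℕ) : Prop :=
  (∀ k, ii k ∈ D) ∧ ∀ k : ℕ, x ∈ phiW N (List.ofFn fun j : Fin k => ii (j : ℕ)) '' F

def SepComp (E A B : Set (ℝ × ℝ)) : Prop :=
  A ⊆ E ∧ B ⊆ E ∧
    ∀ y ∈ A, ∀ z ∈ B, connectedComponentIn E y ≠ connectedComponentIn E z

def WellSep (N : ℕ) (D : Finset (ℕ × ℕ)) (F : Set (ℝ × ℝ)) (x : ℝ × ℝ) (n : ℕ)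
    (ω τ : List (ℕ × ℕ)) : Prop :=
  ∀ p : ℕ, 1 ≤ p → SepComp (Ek N D F x (n + p)) (phiW N ω '' F) (phiW N τ '' F)

lemma phiW_cons (N : ℕ) (i : ℕ × ℕ) (l : List (ℕ × ℕ)) :
    phiW N (i :: l) = phi N i ∘ phiW N l := rfl

lemma phiW_nil (N : ℕ) : phiW N ([] : List (ℕ × ℕ)) = id := rfl

lemma phi_continuous (N : ℕ) (i : ℕ × ℕ) : Continuous (phi N i) := by
  unfold phi; fun_prop

lemma phiW_continuous (N : ℕ) (l : List (ℕ × ℕ)) : Continuous (phiW N l) := by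
  induction l with
  | nil => exact continuous_id
  | cons a t ih => rw [phiW_cons]; exact (phi_continuous N a).comp ih

lemma phi_injective (N : ℕ) (hN : 2 ≤ N) (i : ℕ × ℕ) : Function.Injective (phi N i) := by
  intro p q h
  have hN' : (N : ℝ) ≠ 0 := by
    have : 0 < N := by omega
    exact_mod_cast this.ne'
  have h1 := congrArg Prod.fst h
  have h2 := congrArg Prod.snd h
  simp only [phi] at h1 h2
  have e1 : p.1 = q.1 := by field_simp at h1; linarith
  have e2 : p.2 = q.2 := by field_simp at h2; linarith
  exact Prod.ext e1 e2

lemma mem_words_zero (D : Finset (ℕ × ℕ)) (l : List (ℕ × ℕ)) :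
    l ∈ Words D 0 ↔ l = [] := by
  constructor
  · rintro ⟨h, -⟩; exact List.length_eq_zero_iff.mp h
  · rintro rfl; exact ⟨rfl, by simp⟩

lemma mem_words_succ (D : Finset (ℕ × ℕ)) (k : ℕ) (l : List (ℕ × ℕ)) :
    l ∈ Words D (k + 1) ↔ ∃ i ∈ D, ∃ w ∈ Words D k, l = i :: w := by
  constructor
  · rintro ⟨hlen, hmem⟩
    match l with
    | [] => simp at hlen
    | a :: t =>
      exact ⟨a, hmem a (by simp), t, ⟨by simpa using hlen, fun b hb => hmem b (by simp [hb])⟩, rfl⟩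
  · rintro ⟨i, hi, w, ⟨hlen, hmem⟩, rfl⟩
    refine ⟨by simp [hlen], fun a ha => ?_⟩
    rcases List.mem_cons.mp ha with rfl | h
    exacts [hi, hmem _ h]

lemma words_finite (D : Finset (ℕ × ℕ)) (k : ℕ) : (Words D k).Finite := by
  induction k with
  | zero => exact (Set.finite_singleton []).subset (fun l hl => (mem_words_zero D l).mp hl)
  | succ k ih =>
    have : Words D (k+1) ⊆ (fun p : (ℕ × ℕ) × List (ℕ × ℕ) => p.1 :: p.2) ''
        ((D : Set (ℕ × ℕ)) ×ˢ Words D k) := by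
      intro l hl
      obtain ⟨i, hi, w, hw, rfl⟩ := (mem_words_succ D k l).mp hl
      exact ⟨(i, w), ⟨hi, hw⟩, rfl⟩
    exact ((D.finite_toSet.prod ih).image _).subset this

lemma words_nonempty (D : Finset (ℕ × ℕ)) (hD : D.Nonempty) (k : ℕ) :
    (Words D k).Nonempty := by
  induction k with
  | zero => exact ⟨[], (mem_words_zero D []).mpr rfl⟩
  | succ k ih =>
    obtain ⟨w, hw⟩ := ih
    obtain ⟨i, hi⟩ := hD
    exact ⟨i :: w, (mem_words_succ D k _).mpr ⟨i, hi, w, hw, rfl⟩⟩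

lemma attractor_iter (N : ℕ) (D : Finset (ℕ × ℕ)) (F : Set (ℝ × ℝ))
    (hF : IsAttractor N D F) (k : ℕ) : (⋃ w ∈ Words D k, phiW N w '' F) = F := by
  induction k with
  | zero =>
    ext p; simp only [mem_iUnion, exists_prop]
    constructor
    · rintro ⟨w, hw, hp⟩
      rw [mem_words_zero] at hw; subst hw; simpa [phiW_nil] using hp
    · intro hp; exact ⟨[], (mem_words_zero D []).mpr rfl, by simpa [phiW_nil] using hp⟩
  | succ k ih =>
    ext p; simp only [mem_iUnion, exists_prop]
    constructor
    · rintro ⟨w, hw, hp⟩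
      obtain ⟨i, hi, t, ht, rfl⟩ := (mem_words_succ D k w).mp hw
      rw [phiW_cons, Set.image_comp] at hp
      obtain ⟨q, hq, rfl⟩ := hp
      have hqF : q ∈ F := by
        rw [← ih]; exact mem_iUnion₂.mpr ⟨t, ht, hq⟩
      have := hF.2.2
      rw [this]; exact mem_iUnion₂.mpr ⟨i, hi, q, hqF, rfl⟩
    · intro hp
      rw [hF.2.2] at hp
      obtain ⟨i, hi, q, hq, rfl⟩ := mem_iUnion₂.mp hp
      rw [← ih] at hq
      obtain ⟨t, ht, r, hr, rfl⟩ := mem_iUnion₂.mp hq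
      exact ⟨i :: t, (mem_words_succ D k _).mpr ⟨i, hi, t, ht, rfl⟩,
        ⟨r, hr, by simp [phiW_cons]⟩⟩

lemma phiW_image_subset (N : ℕ) (D : Finset (ℕ × ℕ)) (F : Set (ℝ × ℝ))
    (hF : IsAttractor N D F) {k : ℕ} {w : List (ℕ × ℕ)} (hw : w ∈ Words D k) :
    phiW N w '' F ⊆ F := by
  intro p hp
  rw [← attractor_iter N D F hF k]
  exact mem_iUnion₂.mpr ⟨w, hw, hp⟩

lemma key (N : ℕ) (D : Finset (ℕ × ℕ)) (hND : GoodDigits N D)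
    (F : Set (ℝ × ℝ)) (hF : IsAttractor N D F) (hFconn : IsConnected F) :
    ∀ m : ℕ, 1 ≤ m → ∀ I J : Set (List (ℕ × ℕ)), ∀ x : ℝ × ℝ,
      Disjoint I J → I ∪ J = Words D m →
      (⋃ l ∈ I, phiW N l '' F) ∩ (⋃ l ∈ J, phiW N l '' F) = {x} →
      ∃ D1 D2 : Finset (ℕ × ℕ), D1.Nonempty ∧ D2.Nonempty ∧ Disjoint D1 D2 ∧
        D1 ∪ D2 = D ∧
        ∃ y : ℝ × ℝ, (⋃ i ∈ D1, phi N i '' F) ∩ (⋃ i ∈ D2, phi N i '' F) = {y} := by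
  intro m
  induction m with
  | zero => omega
  | succ k ih =>
    intro _ I J x hdisj hcover hsing
    classical
    have hN : 2 ≤ N := hND.1
    have hDne : D.Nonempty := Finset.card_pos.mp (by have := hND.2.2.1; omega)
    have hIW : I ⊆ Words D (k + 1) := hcover ▸ Set.subset_union_left
    have hJW : J ⊆ Words D (k + 1) := hcover ▸ Set.subset_union_right
    by_cases hcase : ∀ i ∈ D, (∀ w ∈ Words D k, (i :: w) ∈ I) ∨ (∀ w ∈ Words D k, (i :: w) ∈ J)
    · -- Case 2: every digit's cylinder lies entirely in I or entirely in J
      set D1 := D.filter (fun i => ∀ w ∈ Words D k, (i :: w) ∈ I) with hD1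
      set D2 := D.filter (fun i => ¬ ∀ w ∈ Words D k, (i :: w) ∈ I) with hD2
      have hD1I : ∀ i ∈ D1, ∀ w ∈ Words D k, (i :: w) ∈ I := fun i hi =>
        (Finset.mem_filter.mp hi).2
      have hD2J : ∀ i ∈ D2, ∀ w ∈ Words D k, (i :: w) ∈ J := by
        intro i hi
        obtain ⟨hiD, hniI⟩ := Finset.mem_filter.mp hi
        rcases hcase i hiD with h | h
        · exact absurd h hniI
        · exact h
      have hfirst : ∀ l ∈ I, ∃ i ∈ D1, ∃ w ∈ Words D k, l = i :: w := by
        intro l hl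
        obtain ⟨i, hiD, w, hw, rfl⟩ := (mem_words_succ D k l).mp (hIW hl)
        refine ⟨i, ?_, w, hw, rfl⟩
        rcases hcase i hiD with h | h
        · exact Finset.mem_filter.mpr ⟨hiD, h⟩
        · exact (Set.disjoint_left.mp hdisj hl (h w hw)).elim
      have hfirstJ : ∀ l ∈ J, ∃ i ∈ D2, ∃ w ∈ Words D k, l = i :: w := by
        intro l hl
        obtain ⟨i, hiD, w, hw, rfl⟩ := (mem_words_succ D k l).mp (hJW hl)
        refine ⟨i, Finset.mem_filter.mpr ⟨hiD, fun h => ?_⟩, w, hw, rfl⟩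
        exact Set.disjoint_left.mp hdisj (h w hw) hl
      have hEI : (⋃ l ∈ I, phiW N l '' F) = ⋃ i ∈ D1, phi N i '' F := by
        apply Set.Subset.antisymm
        · intro p hp
          obtain ⟨l, hl, hpl⟩ := mem_iUnion₂.mp hp
          obtain ⟨i, hi, w, hw, rfl⟩ := hfirst l hl
          rw [phiW_cons, Set.image_comp] at hpl
          exact mem_iUnion₂.mpr ⟨i, hi, Set.image_mono (phiW_image_subset N D F hF hw) hpl⟩
        · intro p hp
          obtain ⟨i, hi, q, hq, rfl⟩ := mem_iUnion₂.mp hp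
          rw [← attractor_iter N D F hF k] at hq
          obtain ⟨w, hw, r, hr, rfl⟩ := mem_iUnion₂.mp hq
          exact mem_iUnion₂.mpr ⟨i :: w, hD1I i hi w hw, r, hr, by simp [phiW_cons]⟩
      have hEJ : (⋃ l ∈ J, phiW N l '' F) = ⋃ i ∈ D2, phi N i '' F := by
        apply Set.Subset.antisymm
        · intro p hp
          obtain ⟨l, hl, hpl⟩ := mem_iUnion₂.mp hp
          obtain ⟨i, hi, w, hw, rfl⟩ := hfirstJ l hl
          rw [phiW_cons, Set.image_comp] at hpl
          exact mem_iUnion₂.mpr ⟨i, hi, Set.image_mono (phiW_image_subset N D F hF hw) hpl⟩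
        · intro p hp
          obtain ⟨i, hi, q, hq, rfl⟩ := mem_iUnion₂.mp hp
          rw [← attractor_iter N D F hF k] at hq
          obtain ⟨w, hw, r, hr, rfl⟩ := mem_iUnion₂.mp hq
          exact mem_iUnion₂.mpr ⟨i :: w, hD2J i hi w hw, r, hr, by simp [phiW_cons]⟩
      have hx : x ∈ (⋃ l ∈ I, phiW N l '' F) ∩ (⋃ l ∈ J, phiW N l '' F) := by
        rw [hsing]; rfl
      obtain ⟨lI, hlI, -⟩ := mem_iUnion₂.mp hx.1
      obtain ⟨lJ, hlJ, -⟩ := mem_iUnion₂.mp hx.2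
      obtain ⟨i1, hi1, -⟩ := hfirst lI hlI
      obtain ⟨i2, hi2, -⟩ := hfirstJ lJ hlJ
      refine ⟨D1, D2, ⟨i1, hi1⟩, ⟨i2, hi2⟩, ?_, ?_, x, ?_⟩
      · refine Finset.disjoint_left.mpr (fun a ha hb => ?_)
        exact (Finset.mem_filter.mp hb).2 (Finset.mem_filter.mp ha).2
      · ext a
        simp only [Finset.mem_union, hD1, hD2, Finset.mem_filter]
        constructor
        · rintro (⟨h, -⟩ | ⟨h, -⟩) <;> exact h
        · intro h; by_cases hh : ∀ w ∈ Words D k, (a :: w) ∈ I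
          · exact Or.inl ⟨h, hh⟩
          · exact Or.inr ⟨h, hh⟩
      · rw [← hEI, ← hEJ]; exact hsing
    · -- Case 1: some digit has words on both sides
      push_neg at hcase
      obtain ⟨i, hiD, hnI, hnJ⟩ := hcase
      obtain ⟨w2, hw2W, hw2nI⟩ := hnI
      obtain ⟨w3, hw3W, hw3nJ⟩ := hnJ
      have hw2J : (i :: w2) ∈ J := by
        have : (i :: w2) ∈ I ∪ J := by
          rw [hcover]; exact (mem_words_succ D k _).mpr ⟨i, hiD, w2, hw2W, rfl⟩
        rcases this with h | h
        · exact absurd h hw2nI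
        · exact h
      have hw3I : (i :: w3) ∈ I := by
        have : (i :: w3) ∈ I ∪ J := by
          rw [hcover]; exact (mem_words_succ D k _).mpr ⟨i, hiD, w3, hw3W, rfl⟩
        rcases this with h | h
        · exact h
        · exact absurd h hw3nJ
      rcases Nat.eq_zero_or_pos k with rfl | hk
      · -- k = 0 : impossible
        rw [mem_words_zero] at hw2W hw3W
        subst hw2W; subst hw3W
        exact absurd hw3I (fun h => Set.disjoint_left.mp hdisj h hw2J)
      · -- k ≥ 1 : pull back by phi i and apply induction hypothesis
        set I' : Set (List (ℕ × ℕ)) := {w | w ∈ Words D k ∧ (i :: w) ∈ I} with hI'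
        set J' : Set (List (ℕ × ℕ)) := {w | w ∈ Words D k ∧ (i :: w) ∈ J} with hJ'
        set A : Set (ℝ × ℝ) := ⋃ w ∈ I', phiW N w '' F with hA
        set B : Set (ℝ × ℝ) := ⋃ w ∈ J', phiW N w '' F with hB
        have hN0 : (N : ℝ) ≠ 0 := by
          have : 0 < N := by omega
          exact_mod_cast this.ne'
        set y : ℝ × ℝ := (N * x.1 - i.1, N * x.2 - i.2) with hy
        have hxy : phi N i y = x := by
          simp only [phi, hy]
          exact Prod.ext (by field_simp; ring) (by field_simp; ring)
        have hdisj' : Disjoint I' J' := by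
          refine Set.disjoint_left.mpr (fun w hw hw' => ?_)
          exact Set.disjoint_left.mp hdisj hw.2 hw'.2
        have hcover' : I' ∪ J' = Words D k := by
          ext w
          constructor
          · rintro (h | h) <;> exact h.1
          · intro hw
            have : (i :: w) ∈ I ∪ J := by
              rw [hcover]; exact (mem_words_succ D k _).mpr ⟨i, hiD, w, hw, rfl⟩
            rcases this with h | h
            · exact Or.inl ⟨hw, h⟩
            · exact Or.inr ⟨hw, h⟩
        have hAIsub : phi N i '' A ⊆ ⋃ l ∈ I, phiW N l '' F := by
          rintro p ⟨q, hq, rfl⟩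
          obtain ⟨w, hw, r, hr, rfl⟩ := mem_iUnion₂.mp hq
          exact mem_iUnion₂.mpr ⟨i :: w, hw.2, r, hr, by simp [phiW_cons]⟩
        have hBJsub : phi N i '' B ⊆ ⋃ l ∈ J, phiW N l '' F := by
          rintro p ⟨q, hq, rfl⟩
          obtain ⟨w, hw, r, hr, rfl⟩ := mem_iUnion₂.mp hq
          exact mem_iUnion₂.mpr ⟨i :: w, hw.2, r, hr, by simp [phiW_cons]⟩
        have hsubx : (phi N i '' A) ∩ (phi N i '' B) ⊆ {x} := by
          intro p hp
          rw [← hsing]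
          exact ⟨hAIsub hp.1, hBJsub hp.2⟩
        have hAcomp : IsCompact A := by
          refine Set.Finite.isCompact_biUnion ((words_finite D k).subset (fun w hw => hw.1))
            (fun w _ => ?_)
          exact hF.2.1.image (phiW_continuous N w)
        have hBcomp : IsCompact B := by
          refine Set.Finite.isCompact_biUnion ((words_finite D k).subset (fun w hw => hw.1))
            (fun w _ => ?_)
          exact hF.2.1.image (phiW_continuous N w)
        have hAicomp : IsCompact (phi N i '' A) := hAcomp.image (phi_continuous N i)
        have hBicomp : IsCompact (phi N i '' B) := hBcomp.image (phi_continuous N i)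
        have hAne : A.Nonempty := by
          obtain ⟨z, hz⟩ := hF.1
          exact ⟨phiW N w3 z, mem_iUnion₂.mpr ⟨w3, ⟨hw3W, hw3I⟩, z, hz, rfl⟩⟩
        have hBne : B.Nonempty := by
          obtain ⟨z, hz⟩ := hF.1
          exact ⟨phiW N w2 z, mem_iUnion₂.mpr ⟨w2, ⟨hw2W, hw2J⟩, z, hz, rfl⟩⟩
        have hPeq : phi N i '' F = (phi N i '' A) ∪ (phi N i '' B) := by
          have hAB : A ∪ B = ⋃ w ∈ Words D k, phiW N w '' F := by
            rw [← hcover']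
            exact (Set.biUnion_union I' J' _).symm
          rw [← Set.image_union, hAB, attractor_iter N D F hF k]
        have hxmem : x ∈ (phi N i '' A) ∩ (phi N i '' B) := by
          by_contra hxn
          have hdisjAB : (phi N i '' A) ∩ (phi N i '' B) = ∅ := by
            rw [Set.eq_empty_iff_forall_notMem]
            intro p hp
            have := hsubx hp
            rw [Set.mem_singleton_iff] at this
            exact hxn (this ▸ hp)
          have hP : IsPreconnected (phi N i '' F) :=
            hFconn.isPreconnected.image _ (phi_continuous N i).continuousOn
          have h1 : IsOpen (phi N i '' B)ᶜ := hBicomp.isClosed.isOpen_compl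
          have h2 : IsOpen (phi N i '' A)ᶜ := hAicomp.isClosed.isOpen_compl
          have hcov : phi N i '' F ⊆ (phi N i '' B)ᶜ ∪ (phi N i '' A)ᶜ := by
            intro p hp
            rw [hPeq] at hp
            rcases hp with h | h
            · exact Or.inl (fun hB' => Set.eq_empty_iff_forall_notMem.mp hdisjAB p ⟨h, hB'⟩)
            · exact Or.inr (fun hA' => Set.eq_empty_iff_forall_notMem.mp hdisjAB p ⟨hA', h⟩)
          have hn1 : (phi N i '' F ∩ (phi N i '' B)ᶜ).Nonempty := by
            obtain ⟨a, ha⟩ := hAne.image (phi N i)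
            exact ⟨a, hPeq ▸ Or.inl ha,
              fun hB' => Set.eq_empty_iff_forall_notMem.mp hdisjAB a ⟨ha, hB'⟩⟩
          have hn2 : (phi N i '' F ∩ (phi N i '' A)ᶜ).Nonempty := by
            obtain ⟨b, hb⟩ := hBne.image (phi N i)
            exact ⟨b, hPeq ▸ Or.inr hb,
              fun hA' => Set.eq_empty_iff_forall_notMem.mp hdisjAB b ⟨hA', hb⟩⟩
          obtain ⟨z, hzP, hz1, hz2⟩ := hP _ _ h1 h2 hcov hn1 hn2
          rw [hPeq] at hzP
          rcases hzP with h | h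
          · exact hz2 h
          · exact hz1 h
        have hyA : y ∈ A := by
          obtain ⟨a, ha, hax⟩ := hxmem.1
          have : a = y := phi_injective N hN i (by rw [hax, hxy])
          exact this ▸ ha
        have hyB : y ∈ B := by
          obtain ⟨b, hb, hbx⟩ := hxmem.2
          have : b = y := phi_injective N hN i (by rw [hbx, hxy])
          exact this ▸ hb
        have hsing' : A ∩ B = {y} := by
          apply Set.Subset.antisymm
          · intro u hu
            have : phi N i u ∈ (phi N i '' A) ∩ (phi N i '' B) :=
              ⟨Set.mem_image_of_mem _ hu.1, Set.mem_image_of_mem _ hu.2⟩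
            have hux := hsubx this
            rw [Set.mem_singleton_iff] at hux
            exact phi_injective N hN i (by rw [hux, hxy])
          · intro u hu
            rw [Set.mem_singleton_iff] at hu
            exact hu ▸ ⟨hyA, hyB⟩
        exact ih hk I' J' y hdisj' hcover' hsing'

theorem stmt7 (N : ℕ) (D : Finset (ℕ × ℕ)) (hND : GoodDigits N D)
    (F : Set (ℝ × ℝ)) (hF : IsAttractor N D F) (hFconn : IsConnected F)
    (m : ℕ) (hm : 1 ≤ m) (I J : Set (List (ℕ × ℕ)))
    (hdisj : Disjoint I J) (hcover : I ∪ J = Words D m)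
    (x : ℝ × ℝ)
    (hsing : (⋃ l ∈ I, phiW N l '' F) ∩ (⋃ l ∈ J, phiW N l '' F) = {x}) :
    ∃ D1 D2 : Finset (ℕ × ℕ), D1.Nonempty ∧ D2.Nonempty ∧ Disjoint D1 D2 ∧
      D1 ∪ D2 = D ∧
      ∃ y : ℝ × ℝ, (⋃ i ∈ D1, phi N i '' F) ∩ (⋃ i ∈ D2, phi N i '' F) = {y} := by
  exact key N D hND F hF hFconn m hm I J x hdisj hcover hsing
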